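/- arXiv:1908.02228 — 2 statements merged into one kernel-verified Lean document; each statement's English description precedes it below -/
import Mathlib

section
/- Let ι be a nonempty finite type, p : ι → ℝ with p i ≥ 0 for all i and ∑ i, p i = 1, L : ι → ℝ, and c ∈ (0, 1). Define VaR := sInf { y : ℝ | ∑ i in {i | L i > y}, p i ≤ 1 - c }. Then for every π ∈ ℝ, VaR + (1 - c)⁻¹ * ∑ i, p i * max (L i - VaR) 0 ≤ π + (1 - c)⁻¹ * ∑ i, p i * max (L i - π) 0. -/
open scoped BigOperators
open scoped Classical

/-- The Rockafellar–Uryasev function `F(π) = π + (1-c)⁻¹ E[(L - π)⁺]` on a finite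
probability space with weights `p` is minimized at `π = VaR_c(L)`, where
`VaR_c(L) = inf {y : P(L > y) ≤ 1 - c}`. -/
theorem var_minimizes_RU {ι : Type*} [Fintype ι] [Nonempty ι]
    (p : ι → ℝ) (hp : ∀ i, 0 ≤ p i) (hsum : ∑ i, p i = 1)
    (L : ι → ℝ) (c : ℝ) (hc : c ∈ Set.Ioo (0 : ℝ) 1) :
    ∀ π : ℝ,
      sInf {y : ℝ | ∑ i ∈ Finset.univ.filter (fun i => L i > y), p i ≤ 1 - c} +
          (1 - c)⁻¹ *
            ∑ i, p i *
              max (L i -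
                sInf {y : ℝ | ∑ i ∈ Finset.univ.filter (fun i => L i > y), p i ≤ 1 - c}) 0 ≤
        π + (1 - c)⁻¹ * ∑ i, p i * max (L i - π) 0 := by
  obtain ⟨hc0, hc1⟩ := hc
  have h1c : (0:ℝ) < 1 - c := by linarith
  have ht : (0:ℝ) < (1 - c)⁻¹ := inv_pos.mpr h1c
  have htc : (1 - c)⁻¹ * (1 - c) = 1 := inv_mul_cancel₀ (ne_of_gt h1c)
  set S : ℝ → ℝ := fun y => ∑ i ∈ Finset.univ.filter (fun i => L i > y), p i with hSdef
  set F : ℝ → ℝ := fun x => x + (1 - c)⁻¹ * ∑ i, p i * max (L i - x) 0 with hFdef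
  have hSle : ∀ a b : ℝ, a ≤ b → S b ≤ S a := by
    intro a b hab
    apply Finset.sum_le_sum_of_subset_of_nonneg
    · intro i hi
      simp only [Finset.mem_filter, Finset.mem_univ, true_and] at *
      linarith
    · intro i _ _; exact hp i
  have hne : {y : ℝ | ∑ i ∈ Finset.univ.filter (fun i => L i > y), p i ≤ 1 - c}.Nonempty := by
    refine ⟨Finset.univ.sup' Finset.univ_nonempty L, ?_⟩
    have : (Finset.univ.filter (fun i => L i > Finset.univ.sup' Finset.univ_nonempty L)) = ∅ := by
      apply Finset.filter_false_of_mem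
      intro i _
      exact not_lt.mpr (Finset.le_sup' L (Finset.mem_univ i))
    simp only [Set.mem_setOf_eq, this, Finset.sum_empty]
    linarith
  have hbdd : BddBelow {y : ℝ | ∑ i ∈ Finset.univ.filter (fun i => L i > y), p i ≤ 1 - c} := by
    refine ⟨Finset.univ.inf' Finset.univ_nonempty L, ?_⟩
    intro y hy
    simp only [Set.mem_setOf_eq] at hy
    by_contra h
    push_neg at h
    have hall : ∀ i : ι, L i > y := by
      intro i
      exact lt_of_lt_of_le h (Finset.inf'_le L (Finset.mem_univ i))
    have : (Finset.univ.filter (fun i => L i > y)) = Finset.univ := by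
      apply Finset.filter_true_of_mem
      intro i _; exact hall i
    rw [this, hsum] at hy
    linarith
  set v := sInf {y : ℝ | ∑ i ∈ Finset.univ.filter (fun i => L i > y), p i ≤ 1 - c} with hv
  -- v is in the set
  have hvA : S v ≤ 1 - c := by
    by_cases hT : (Finset.univ.filter (fun i => L i > v)).Nonempty
    · set m := (Finset.univ.filter (fun i => L i > v)).inf' hT L with hm
      have hvm : v < m := by
        obtain ⟨i, hi, hiL⟩ := Finset.exists_mem_eq_inf' hT L
        rw [hm, hiL]
        simp only [Finset.mem_filter, Finset.mem_univ, true_and] at hi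
        exact hi
      obtain ⟨y, hy, hylt⟩ := csInf_lt_iff hbdd hne |>.mp (by rw [← hv] at *; exact hvm)
      simp only [Set.mem_setOf_eq] at hy
      calc S v ≤ S y := by
              apply Finset.sum_le_sum_of_subset_of_nonneg
              · intro i hi
                simp only [Finset.mem_filter, Finset.mem_univ, true_and] at *
                have : m ≤ L i := Finset.inf'_le L (by simp [hi])
                linarith
              · intro i _ _; exact hp i
        _ ≤ 1 - c := hy
    · rw [Finset.not_nonempty_iff_eq_empty] at hT
      simp only [hSdef, hT, Finset.sum_empty]
      linarith
  have hlt : ∀ a : ℝ, a < v → 1 - c < S a := by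
    intro a ha
    by_contra h
    push_neg at h
    have : v ≤ a := csInf_le hbdd h
    linarith
  -- step lemma
  have step : ∀ a b : ℝ, a < b → (∀ i, a < L i → b ≤ L i) → 1 - c ≤ S a → F b ≤ F a := by
    intro a b hab hno hSa
    have key : ∀ i, p i * max (L i - a) 0 =
        p i * max (L i - b) 0 + (if L i > a then (b - a) * p i else 0) := by
      intro i
      by_cases h : a < L i
      · have hb := hno i h
        rw [if_pos h, max_eq_left (by linarith), max_eq_left (by linarith)]
        ring
      · push_neg at h
        rw [if_neg (by exact not_lt.mpr h), max_eq_right (by linarith),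
          max_eq_right (by linarith)]
        ring
    have hsum2 : ∑ i, p i * max (L i - a) 0 =
        (∑ i, p i * max (L i - b) 0) + (b - a) * S a := by
      rw [Finset.sum_congr rfl (fun i _ => key i), Finset.sum_add_distrib]
      congr 1
      rw [← Finset.sum_filter, hSdef, Finset.mul_sum]
    have hSa' : (b - a) * (1 - c) ≤ (b - a) * S a :=
      mul_le_mul_of_nonneg_left hSa (by linarith)
    have h3 : b - a ≤ (1 - c)⁻¹ * ((b - a) * S a) := by
      have := mul_le_mul_of_nonneg_left hSa' (le_of_lt ht)
      calc b - a = (1 - c)⁻¹ * ((b - a) * (1 - c)) := by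
              field_simp
        _ ≤ (1 - c)⁻¹ * ((b - a) * S a) := this
    simp only [hFdef]
    rw [hsum2, mul_add]
    linarith
  -- left part: F v ≤ F a for a < v
  have left : ∀ n : ℕ, ∀ a : ℝ, a < v →
      (Finset.univ.filter (fun i => a < L i ∧ L i < v)).card ≤ n → F v ≤ F a := by
    intro n
    induction n with
    | zero =>
      intro a ha hcard
      apply step a v ha ?_ (le_of_lt (hlt a ha))
      intro i hi
      by_contra h
      push_neg at h
      have : i ∈ Finset.univ.filter (fun i => a < L i ∧ L i < v) := by
        simp [hi, h]
      rw [Finset.card_eq_zero.mp (Nat.le_zero.mp hcard)] at this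
      exact absurd this (Finset.notMem_empty i)
    | succ n ih =>
      intro a ha hcard
      by_cases h : (Finset.univ.filter (fun i => a < L i ∧ L i < v)).card ≤ n
      · exact ih a ha h
      push_neg at h
      set B := Finset.univ.filter (fun i => a < L i ∧ L i < v) with hB
      have hBne : B.Nonempty := Finset.card_pos.mp (by omega)
      set a' := B.inf' hBne L with ha'
      obtain ⟨i₀, hi₀, hi₀L⟩ := Finset.exists_mem_eq_inf' hBne L
      have hi₀' := hi₀
      rw [hB, Finset.mem_filter] at hi₀'
      have haa' : a < a' := by rw [ha', hi₀L]; exact hi₀'.2.1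
      have ha'v : a' < v := by rw [ha', hi₀L]; exact hi₀'.2.2
      have step1 : F a' ≤ F a := by
        apply step a a' haa' ?_ (le_of_lt (hlt a ha))
        intro i hi
        by_cases hiv : L i < v
        · have : i ∈ B := by rw [hB]; simp [hi, hiv]
          exact Finset.inf'_le L this
        · push_neg at hiv; linarith
      have hsub : Finset.univ.filter (fun i => a' < L i ∧ L i < v) ⊂ B := by
        constructor
        · intro i hi
          simp only [Finset.mem_filter, Finset.mem_univ, true_and] at hi ⊢
          rw [hB]; simp only [Finset.mem_filter, Finset.mem_univ, true_and]
          exact ⟨by linarith, hi.2⟩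
        · intro hsub'
          have := hsub' hi₀
          simp only [Finset.mem_filter, Finset.mem_univ, true_and] at this
          rw [ha', hi₀L] at this
          exact absurd this.1 (lt_irrefl _)
      have hcard' : (Finset.univ.filter (fun i => a' < L i ∧ L i < v)).card ≤ n := by
        have := Finset.card_lt_card hsub
        omega
      exact le_trans (ih a' ha'v hcard') step1
  -- main
  intro π
  show F v ≤ F π
  rcases lt_or_ge π v with hπ | hπ
  · exact left (Finset.univ.filter (fun i => π < L i ∧ L i < v)).card π hπ le_rfl
  · -- right case: v ≤ π
    have key : ∀ i, p i * max (L i - v) 0 ≤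
        p i * max (L i - π) 0 + (if L i > v then (π - v) * p i else 0) := by
      intro i
      by_cases h : v < L i
      · rw [if_pos h, max_eq_left (by linarith)]
        have h1 : L i - π ≤ max (L i - π) 0 := le_max_left _ _
        nlinarith [hp i]
      · push_neg at h
        rw [if_neg (not_lt.mpr h), max_eq_right (by linarith)]
        have : 0 ≤ max (L i - π) 0 := le_max_right _ _
        nlinarith [hp i]
    have hsum2 : ∑ i, p i * max (L i - v) 0 ≤
        (∑ i, p i * max (L i - π) 0) + (π - v) * S v := by
      calc ∑ i, p i * max (L i - v) 0
          ≤ ∑ i, (p i * max (L i - π) 0 + (if L i > v then (π - v) * p i else 0)) :=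
            Finset.sum_le_sum (fun i _ => key i)
        _ = (∑ i, p i * max (L i - π) 0) + (π - v) * S v := by
            rw [Finset.sum_add_distrib]
            congr 1
            rw [← Finset.sum_filter, hSdef, Finset.mul_sum]
    have hS2 : (π - v) * S v ≤ (π - v) * (1 - c) := by
      apply mul_le_mul_of_nonneg_left hvA (by linarith)
    simp only [hFdef]
    have h4 : (1 - c)⁻¹ * ∑ i, p i * max (L i - v) 0 ≤
        (1 - c)⁻¹ * ((∑ i, p i * max (L i - π) 0) + (π - v) * (1 - c)) := by
      apply mul_le_mul_of_nonneg_left _ (le_of_lt ht)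
      linarith
    rw [mul_add] at h4
    have h5 : (1 - c)⁻¹ * ((π - v) * (1 - c)) = π - v := by field_simp
    rw [h5] at h4
    linarith
end

section
/- Let ι be a nonempty finite type, p : ι → ℝ with p i ≥ 0 for all i and ∑ i, p i = 1, L : ι → ℝ, c ∈ [0, 1), and γ₀ ∈ ℝ. Define CVaR_c(L) := ⨅ π : ℝ, (π + (1 - c)⁻¹ * ∑ i, p i * max (L i - π) 0). Then CVaR_c(L) ≤ γ₀ if and only if there exist π ∈ ℝ and u : ι → ℝ such that (∀ i, 0 ≤ u i), (∀ i, L i - π ≤ u i), and π + (1 - c)⁻¹ * ∑ i, p i * u i ≤ γ₀. -/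
/-!
The Rockafellar–Uryasev objective `π ↦ π + (1 - c)⁻¹ * ∑ i, p i * max (L i - π) 0` is continuous,
equals `π` to the right of all losses and, because `(1 - c)⁻¹ ≥ 1`, is nonincreasing to the left of
them; hence it attains its infimum. At a minimizer `π₀` the excesses `u i = max (L i - π₀) 0` solve
the linear system, and conversely every feasible `(π, u)` bounds the objective at `π` from above.
-/

open scoped BigOperators

/-- The Conditional Value-at-Risk of a loss `L` at level `c` on a finite probability
space with weights `p`, via the Rockafellar–Uryasev representation. -/
noncomputable def CVaR {ι : Type*} [Fintype ι] (p : ι → ℝ) (c : ℝ) (L : ι → ℝ) : ℝ :=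
  ⨅ π : ℝ, (π + (1 - c)⁻¹ * ∑ i, p i * max (L i - π) 0)

open Filter

section CVaRObjective

variable {ι : Type*} [Fintype ι] (p : ι → ℝ) (t : ℝ) (L : ι → ℝ)

noncomputable def cvarObjective (π : ℝ) : ℝ :=
  π + t * ∑ i, p i * max (L i - π) 0

theorem continuous_cvarObjective : Continuous (cvarObjective p t L) := by
  unfold cvarObjective
  fun_prop

variable {p t L}

theorem cvarObjective_eq_self {π : ℝ} (h : π ∈ upperBounds (Set.range L)) :
    cvarObjective p t L π = π := by
  have hzero : ∀ i, max (L i - π) 0 = 0 := fun i =>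
    max_eq_right (sub_nonpos.2 (h ⟨i, rfl⟩))
  simp [cvarObjective, hzero]

theorem cvarObjective_eq_of_mem_lowerBounds (hsum : ∑ i, p i = 1) {π : ℝ}
    (h : π ∈ lowerBounds (Set.range L)) :
    cvarObjective p t L π = π + t * (∑ i, p i * L i - π) := by
  have hpos : ∀ i, max (L i - π) 0 = L i - π := fun i =>
    max_eq_left (sub_nonneg.2 (h ⟨i, rfl⟩))
  simp only [cvarObjective, hpos, mul_sub, Finset.sum_sub_distrib, ← Finset.sum_mul, hsum, one_mul]

theorem cvarObjective_antitoneOn (hsum : ∑ i, p i = 1) (ht : 1 ≤ t) :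
    AntitoneOn (cvarObjective p t L) (lowerBounds (Set.range L)) := by
  intro a ha b hb hab
  rw [cvarObjective_eq_of_mem_lowerBounds hsum ha, cvarObjective_eq_of_mem_lowerBounds hsum hb]
  nlinarith [mul_nonneg (sub_nonneg.2 hab) (sub_nonneg.2 ht)]

theorem cvarObjective_le (hp : ∀ i, 0 ≤ p i) (ht : 0 ≤ t) {π : ℝ} {u : ι → ℝ}
    (hu₀ : ∀ i, 0 ≤ u i) (hu : ∀ i, L i - π ≤ u i) :
    cvarObjective p t L π ≤ π + t * ∑ i, p i * u i := by
  unfold cvarObjective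
  gcongr with i
  · exact hp i
  · exact max_le (hu i) (hu₀ i)

theorem exists_forall_cvarObjective_le (hsum : ∑ i, p i = 1) (ht : 1 ≤ t) :
    ∃ π₀, ∀ π, cvarObjective p t L π₀ ≤ cvarObjective p t L π := by
  obtain ⟨m, hm⟩ := (Set.finite_range L).bddBelow
  obtain ⟨M, hM⟩ := (Set.finite_range L).bddAbove
  refine (continuous_cvarObjective p t L).exists_forall_le' m ?_
  rw [cocompact_eq_atBot_atTop, eventually_sup]
  constructor
  · filter_upwards [eventually_le_atBot m] with π hπ
    exact cvarObjective_antitoneOn hsum ht (fun _ hx => hπ.trans (hm hx)) hm hπ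
  · filter_upwards [eventually_ge_atTop (max M (cvarObjective p t L m))] with π hπ
    rw [cvarObjective_eq_self fun _ hx => (hM hx).trans (le_of_max_le_left hπ)]
    exact le_of_max_le_right hπ

end CVaRObjective

theorem cvar_constraint_iff_linear_general {ι : Type*} [Fintype ι]
    (p : ι → ℝ) (hp : ∀ i, 0 ≤ p i) (hsum : ∑ i, p i = 1)
    (L : ι → ℝ) (c γ₀ : ℝ) (hc : c ∈ Set.Ico (0 : ℝ) 1) :
    CVaR p c L ≤ γ₀ ↔
      ∃ (π : ℝ) (u : ι → ℝ), (∀ i, 0 ≤ u i) ∧ (∀ i, L i - π ≤ u i) ∧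
        π + (1 - c)⁻¹ * ∑ i, p i * u i ≤ γ₀ := by
  obtain ⟨hc₀, hc₁⟩ := hc
  have ht : 1 ≤ (1 - c)⁻¹ := one_le_inv₀ (by linarith) |>.2 (by linarith)
  obtain ⟨π₀, hπ₀⟩ := exists_forall_cvarObjective_le (L := L) hsum ht
  have hbdd : BddBelow (Set.range (cvarObjective p (1 - c)⁻¹ L)) :=
    ⟨_, Set.forall_mem_range.2 hπ₀⟩
  have hCVaR : CVaR p c L = cvarObjective p (1 - c)⁻¹ L π₀ :=
    le_antisymm (ciInf_le hbdd π₀) (le_ciInf hπ₀)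
  constructor
  · intro h
    exact ⟨π₀, fun i => max (L i - π₀) 0, fun i => le_max_right _ _, fun i => le_max_left _ _,
      hCVaR.symm.trans_le h⟩
  · rintro ⟨π, u, hu₀, hu, hγ₀⟩
    calc CVaR p c L ≤ cvarObjective p (1 - c)⁻¹ L π := ciInf_le hbdd π
      _ ≤ π + (1 - c)⁻¹ * ∑ i, p i * u i := cvarObjective_le hp (by linarith) hu₀ hu
      _ ≤ γ₀ := hγ₀

/-- Reformulation of the CVaR constraint `CVaR_c(L) ≤ γ₀` as the finite system of
linear inequalities (4.9)–(4.12) of the paper. -/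
theorem cvar_constraint_iff_linear {ι : Type*} [Fintype ι] [Nonempty ι]
    (p : ι → ℝ) (hp : ∀ i, 0 ≤ p i) (hsum : ∑ i, p i = 1)
    (L : ι → ℝ) (c γ₀ : ℝ) (hc : c ∈ Set.Ico (0 : ℝ) 1) :
    CVaR p c L ≤ γ₀ ↔
      ∃ (π : ℝ) (u : ι → ℝ), (∀ i, 0 ≤ u i) ∧ (∀ i, L i - π ≤ u i) ∧
        π + (1 - c)⁻¹ * ∑ i, p i * u i ≤ γ₀ :=
  cvar_constraint_iff_linear_general p hp hsum L c γ₀ hc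
end
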